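/- arXiv:1105.3018 — 3 statements merged into one kernel-verified Lean document; each statement's English description precedes it below -/
import Mathlib

section
/- If F_n is the empirical distribution function of n distinct design points in [0,1] and G is a distribution function on [0,1] whose density g satisfies 0 < c ≤ g, then sup_{u∈[0,1]} |F_n^{-1}(u) − G^{-1}(u)| ≤ (1/c) · sup_{x∈[0,1]} |F_n(x) − G(x)| + 1/(cn), where F_n^{-1}(u) = inf{x : F_n(x) ≥ u}. In particular, if sup_x |F_n(x) − G(x)| ≲ n^{-1/2}, then sup_u |F_n^{-1}(u) − G^{-1}(u)| ≲ n^{-1/2}. -/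
open Set

/-- Inverse empirical vs. inverse population distribution function.  If `Fₙ` is the
empirical distribution function of `n` distinct design points in `[0,1]` and `G` is a
distribution function on `[0,1]` whose density is bounded below by `c > 0`, then
`sup_{u ∈ [0,1]} |Fₙ⁻¹ u - G⁻¹ u| ≤ (1/c) · sup_{x ∈ [0,1]} |Fₙ x - G x| + 1/(c n)`,
where `Fₙ⁻¹ u = inf {x ∈ [0,1] : Fₙ x ≥ u}`.  In particular, if
`sup_x |Fₙ x - G x| ≤ Cb · n^{-1/2}` then `|Fₙ⁻¹ u - G⁻¹ u| ≤ ((Cb + 1)/c) · n^{-1/2}`. -/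
theorem inverse_empirical_df_close (n : ℕ) (hn : 0 < n) (x : Fin n → ℝ)
    (hx_mem : ∀ i, x i ∈ Icc (0 : ℝ) 1) (hx_distinct : Function.Injective x)
    (G Ginv g : ℝ → ℝ) (c : ℝ) (hc : 0 < c)
    (hG0 : G 0 = 0) (hG1 : G 1 = 1)
    (hGmono : StrictMonoOn G (Icc 0 1))
    (hderiv : ∀ y ∈ Icc (0 : ℝ) 1, HasDerivAt G (g y) y)
    (hg : ∀ y ∈ Icc (0 : ℝ) 1, c ≤ g y)
    (hGinv_mem : ∀ u ∈ Icc (0 : ℝ) 1, Ginv u ∈ Icc (0 : ℝ) 1)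
    (hGinv : ∀ u ∈ Icc (0 : ℝ) 1, G (Ginv u) = u)
    (hGinv' : ∀ y ∈ Icc (0 : ℝ) 1, Ginv (G y) = y)
    (Fn : ℝ → ℝ)
    (hFn : ∀ y : ℝ, Fn y = ((Finset.univ.filter (fun i => x i ≤ y)).card : ℝ) / n)
    (Fninv : ℝ → ℝ)
    (hFninv : ∀ u : ℝ, Fninv u = sInf {y : ℝ | y ∈ Icc (0 : ℝ) 1 ∧ u ≤ Fn y})
    (D : ℝ) (hD : D = sSup ((fun y => |Fn y - G y|) '' Icc (0 : ℝ) 1)) :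
    (∀ u ∈ Icc (0 : ℝ) 1, |Fninv u - Ginv u| ≤ (1 / c) * D + 1 / (c * n)) ∧
    (∀ Cb : ℝ, 0 ≤ Cb → D ≤ Cb * (n : ℝ) ^ (-(1 / 2 : ℝ)) →
      ∀ u ∈ Icc (0 : ℝ) 1,
        |Fninv u - Ginv u| ≤ ((Cb + 1) / c) * (n : ℝ) ^ (-(1 / 2 : ℝ))) := by
  have hn' : (0 : ℝ) < n := by exact_mod_cast hn
  -- basic bounds for Fn
  have hFn_nonneg : ∀ y, 0 ≤ Fn y := by
    intro y; rw [hFn y]; positivity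
  have hFn_le_one : ∀ y, Fn y ≤ 1 := by
    intro y; rw [hFn y, div_le_one hn']
    calc ((Finset.univ.filter (fun i => x i ≤ y)).card : ℝ)
        ≤ ((Finset.univ : Finset (Fin n)).card : ℝ) := by
          exact_mod_cast Finset.card_filter_le _ _
      _ = n := by simp
  -- G maps [0,1] to [0,1]
  have hGmem : ∀ y ∈ Icc (0 : ℝ) 1, G y ∈ Icc (0 : ℝ) 1 := by
    intro y hy
    have hm := hGmono.monotoneOn
    constructor
    · have := hm (left_mem_Icc.mpr zero_le_one) hy hy.1
      linarith [hG0]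
    · have := hm hy (right_mem_Icc.mpr zero_le_one) hy.2
      linarith [hG1]
  -- D is an upper bound for |Fn - G| on [0,1], and D ≥ 0
  have hbdd : BddAbove ((fun y => |Fn y - G y|) '' Icc (0 : ℝ) 1) := by
    refine ⟨1, ?_⟩
    rintro _ ⟨y, hy, rfl⟩
    have h1 := hFn_nonneg y; have h2 := hFn_le_one y
    have h3 := (hGmem y hy).1; have h4 := (hGmem y hy).2
    rw [abs_le]; constructor <;> linarith
  have hD_ub : ∀ y ∈ Icc (0 : ℝ) 1, |Fn y - G y| ≤ D := by
    intro y hy; rw [hD]; exact le_csSup hbdd ⟨y, hy, rfl⟩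
  have hD0 : 0 ≤ D := (abs_nonneg _).trans (hD_ub 0 (by norm_num))
  -- mean value theorem: quantitative growth of G
  have hkey : ∀ a ∈ Icc (0 : ℝ) 1, ∀ b ∈ Icc (0 : ℝ) 1, a ≤ b →
      c * (b - a) ≤ G b - G a := by
    intro a ha b hb hab
    rcases eq_or_lt_of_le hab with rfl | h
    · simp
    · have hsub : Icc a b ⊆ Icc (0 : ℝ) 1 := Icc_subset_Icc ha.1 hb.2
      have hcont : ContinuousOn G (Icc a b) := fun y hy =>
        ((hderiv y (hsub hy)).continuousAt).continuousWithinAt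
      have hd : ∀ y ∈ Ioo a b, HasDerivAt G (g y) y := fun y hy =>
        hderiv y (hsub (Ioo_subset_Icc_self hy))
      obtain ⟨ξ, hξ, hslope⟩ := exists_hasDerivAt_eq_slope G g h hcont hd
      have hcl : c ≤ (G b - G a) / (b - a) := by
        rw [← hslope]; exact hg ξ (hsub (Ioo_subset_Icc_self hξ))
      have hba : (0 : ℝ) < b - a := by linarith
      calc c * (b - a) ≤ ((G b - G a) / (b - a)) * (b - a) :=
            mul_le_mul_of_nonneg_right hcl hba.le
        _ = G b - G a := div_mul_cancel₀ _ (ne_of_gt hba)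
  -- the core estimate
  have key : ∀ u ∈ Icc (0 : ℝ) 1, |Fninv u - Ginv u| ≤ (1 / c) * D := by
    intro u hu
    set S : Set ℝ := {y : ℝ | y ∈ Icc (0 : ℝ) 1 ∧ u ≤ Fn y} with hS
    have hFn1 : Fn 1 = 1 := by
      rw [hFn 1]
      have : (Finset.univ.filter (fun i => x i ≤ (1:ℝ))) = Finset.univ := by
        apply Finset.filter_true_of_mem
        intro i _; exact (hx_mem i).2
      rw [this]
      simp [div_self (ne_of_gt hn')]
    have hS1 : (1 : ℝ) ∈ S := ⟨right_mem_Icc.mpr zero_le_one, by rw [hFn1]; exact hu.2⟩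
    have hSne : S.Nonempty := ⟨1, hS1⟩
    have hSbdd : BddBelow S := ⟨0, fun y hy => hy.1.1⟩
    set t : ℝ := sInf S with htdef
    have hFninvu : Fninv u = t := hFninv u
    have ht0 : 0 ≤ t := le_csInf hSne (fun y hy => hy.1.1)
    have ht1 : t ≤ 1 := csInf_le hSbdd hS1
    have ht_mem : t ∈ Icc (0 : ℝ) 1 := ⟨ht0, ht1⟩
    -- Fn t ≥ u (right-continuity of the step function)
    have hFnt : u ≤ Fn t := by
      obtain ⟨ε, hε, hεp⟩ : ∃ ε > 0, ∀ i, x i ≤ t ∨ t + ε ≤ x i := by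
        by_cases hne : (Finset.univ.filter (fun i => t < x i)).Nonempty
        · set T := Finset.univ.filter (fun i => t < x i) with hT
          set m := T.inf' hne x with hm
          obtain ⟨i0, hi0, hmi0⟩ := T.exists_mem_eq_inf' hne x
          have hi0' : t < x i0 := (Finset.mem_filter.mp hi0).2
          refine ⟨m - t, by rw [hm, hmi0]; linarith, fun i => ?_⟩
          by_cases hi : x i ≤ t
          · exact Or.inl hi
          · right
            have hiT : i ∈ T := Finset.mem_filter.mpr ⟨Finset.mem_univ i, lt_of_not_ge hi⟩
            have := Finset.inf'_le x hiT
            linarith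
        · refine ⟨1, one_pos, fun i => Or.inl ?_⟩
          by_contra hcon
          exact hne ⟨i, Finset.mem_filter.mpr ⟨Finset.mem_univ i, lt_of_not_ge hcon⟩⟩
      have hconst : ∀ y, t ≤ y → y < t + ε → Fn y = Fn t := by
        intro y hy1 hy2
        rw [hFn y, hFn t]
        have hff : (Finset.univ.filter (fun i => x i ≤ y)) =
            (Finset.univ.filter (fun i => x i ≤ t)) := by
          apply Finset.filter_congr
          intro i _
          constructor
          · intro h
            rcases hεp i with h' | h'
            · exact h'
            · linarith
          · intro h; linarith
        rw [hff]
      obtain ⟨y, hyS, hyl⟩ := (csInf_lt_iff hSbdd hSne).mp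
        (show sInf S < t + ε by rw [← htdef]; linarith)
      have hty : t ≤ y := csInf_le hSbdd hyS
      have := hconst y hty hyl
      rw [← this]; exact hyS.2
    -- lower bound for G t
    have habs := abs_le.mp (hD_ub t ht_mem)
    have hGt_lower : u - D ≤ G t := by
      have := habs.1
      linarith
    -- upper bound for G t
    have hGt_upper : G t ≤ u + D := by
      rcases eq_or_lt_of_le ht0 with h0 | h0
      · rw [← h0, hG0]; linarith [hu.1]
      · by_contra hcon
        push_neg at hcon
        have hεpos : 0 < G t - (u + D) := by linarith
        have hct : ContinuousAt G t := (hderiv t ht_mem).continuousAt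
        obtain ⟨δ, hδ, hδp⟩ := Metric.continuousAt_iff.mp hct _ hεpos
        set y : ℝ := max (t / 2) (t - δ / 2) with hy
        have hy_lt : y < t := by
          apply max_lt <;> [linarith; linarith]
        have hy0 : 0 ≤ y := le_trans (by linarith) (le_max_left _ _)
        have hy_mem : y ∈ Icc (0 : ℝ) 1 := ⟨hy0, by linarith⟩
        have hdist : dist y t < δ := by
          have hge : t - δ / 2 ≤ y := le_max_right _ _
          rw [Real.dist_eq, abs_of_nonpos (by linarith)]
          linarith
        have hGy := hδp hdist
        rw [Real.dist_eq] at hGy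
        have hGy' : G t - (G t - (u + D)) < G y := by
          have := abs_lt.mp hGy
          linarith [this.1]
        have hynS : y ∉ S := fun hyS => absurd (csInf_le hSbdd hyS) (by linarith)
        have hFny : Fn y < u := by
          by_contra hcon2
          exact hynS ⟨hy_mem, le_of_not_gt hcon2⟩
        have habsy := abs_le.mp (hD_ub y hy_mem)
        linarith [habsy.1]
    -- combine via Lipschitz estimate on G⁻¹
    have ha_mem := hGinv_mem u hu
    have hGa : G (Ginv u) = u := hGinv u hu
    rw [hFninvu]
    have hfin : |t - Ginv u| ≤ D / c := by
      rcases le_total (Ginv u) t with hle | hle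
      · have h1 := hkey (Ginv u) ha_mem t ht_mem hle
        rw [hGa] at h1
        rw [abs_of_nonneg (by linarith)]
        rw [le_div_iff₀' hc]
        linarith
      · have h1 := hkey t ht_mem (Ginv u) ha_mem hle
        rw [hGa] at h1
        rw [abs_of_nonpos (by linarith)]
        rw [le_div_iff₀' hc]
        linarith
    calc |t - Ginv u| ≤ D / c := hfin
      _ = (1 / c) * D := by ring
  constructor
  · intro u hu
    have h1 := key u hu
    have h2 : (0 : ℝ) ≤ 1 / (c * n) := by positivity
    linarith
  · intro Cb hCb hDle u hu
    have h1 := key u hu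
    have hp : (0 : ℝ) < (n : ℝ) ^ (-(1 / 2 : ℝ)) := Real.rpow_pos_of_pos hn' _
    have h2 : (1 / c) * D ≤ (1 / c) * (Cb * (n : ℝ) ^ (-(1 / 2 : ℝ))) := by
      apply mul_le_mul_of_nonneg_left hDle (by positivity)
    have h3 : ((Cb + 1) / c) * (n : ℝ) ^ (-(1 / 2 : ℝ)) =
        (1 / c) * (Cb * (n : ℝ) ^ (-(1 / 2 : ℝ))) + (1 / c) * (n : ℝ) ^ (-(1 / 2 : ℝ)) := by
      ring
    have h4 : 0 < (1 / c) * (n : ℝ) ^ (-(1 / 2 : ℝ)) := by positivity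
    linarith
end

section
/- (Marcinkiewicz–Zygmund type strong law for triangular arrays.) Let {X_{ni} : 1 ≤ i ≤ m_n}, n ∈ ℕ, be a triangular array where each row consists of i.i.d. copies of a mean-zero random variable X with E|X|^{2p} < ∞ for some p ∈ [1,2), and m_n ↑ ∞. Then m_n^{-1/p} Σ_{i=1}^{m_n} X_{ni} → 0 almost surely. -/
/-!
Truncate the `n`-th row at level `t / 2`, where `t = κ m_n^{1/p}`, and centre the truncated
entries. Some entry of the row exceeds `t / 2` with probability at most `m_n P(|X| ≥ t / 2)`,
and these are summable because `∑ₖ k P(|X| ≥ δ k^{1/p}) ≲ E|X|^{2p}`. As `E X = 0`, the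
centring moves the row sum by `m_n |E X 1{|X| ≤ t/2}| ≤ m_n (t/2)^{1-2p} E|X|^{2p} = o(t)`.
The centred truncated entries are bounded by `t`; iterating a Hoffmann-Jørgensen type
inequality `J` times gives `P(|S| > 3^J t) ≤ (18 m_n σ² / t²)^{J+1} ≍ m_n^{-(J+1)(2/p-1)}`,
which is summable once `(J+1)(2/p-1) > 1`, possible precisely because `p < 2`. Borel–Cantelli
concludes.
-/

open Filter MeasureTheory ProbabilityTheory Finset
open scoped ENNReal

namespace TriangularMZ

lemma tsum_natCast_mul_measure_le_lt_top {α : Type*} [MeasurableSpace α] {μ : Measure α}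
    [IsFiniteMeasure μ] {f : α → ℝ} (hf : Measurable f)
    (hf2 : Integrable (fun x => f x ^ 2) μ) :
    ∑' k : ℕ, (k : ℝ≥0∞) * μ {x | (k : ℝ) ≤ f x} < ∞ := by
  set s : ℕ → Set α := fun k => {x | (k : ℝ) ≤ f x}
  have hs : ∀ k, MeasurableSet (s k) := fun k => measurableSet_le measurable_const hf
  have hpt : ∀ x, ∑' k : ℕ, (s k).indicator (fun _ => (k : ℝ≥0∞)) x ≤
      ENNReal.ofReal (2 * f x ^ 2 + 2) := by
    intro x
    set N := ⌊|f x|⌋₊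
    have hkN : ∀ k, x ∈ s k → k ≤ N := fun k hk => Nat.le_floor (hk.trans (le_abs_self _))
    have hN : (N : ℝ) ≤ |f x| := Nat.floor_le (abs_nonneg _)
    rw [tsum_eq_sum (s := range (N + 1)) fun k hk => Set.indicator_of_notMem
      (fun h => hk (mem_range.2 (Nat.lt_succ_of_le (hkN k h)))) _]
    calc ∑ k ∈ range (N + 1), (s k).indicator (fun _ => (k : ℝ≥0∞)) x
        ≤ ∑ _k ∈ range (N + 1), (N : ℝ≥0∞) :=
          sum_le_sum fun k _ => Set.indicator_apply_le' (fun h => by exact_mod_cast hkN k h)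
            fun _ => bot_le
      _ = ENNReal.ofReal (((N : ℝ) + 1) * N) := by
          rw [sum_const, card_range, nsmul_eq_mul, ENNReal.ofReal_mul (by positivity)]
          norm_cast
      _ ≤ ENNReal.ofReal (2 * f x ^ 2 + 2) := by
          gcongr
          nlinarith [mul_le_mul hN hN N.cast_nonneg (abs_nonneg _), sq_abs (f x),
            sq_nonneg (|f x| - 1)]
  calc ∑' k : ℕ, (k : ℝ≥0∞) * μ (s k)
      = ∫⁻ x, ∑' k : ℕ, (s k).indicator (fun _ => (k : ℝ≥0∞)) x ∂μ := by
        rw [lintegral_tsum fun k => (measurable_const.indicator (hs k)).aemeasurable]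
        exact tsum_congr fun k => (lintegral_indicator_const (hs k) _).symm
    _ ≤ ∫⁻ x, ENNReal.ofReal (2 * f x ^ 2 + 2) ∂μ := lintegral_mono hpt
    _ < ∞ := ((hf2.const_mul 2).add (integrable_const 2)).lintegral_lt_top

lemma tsum_natCast_mul_measure_mul_rpow_le_abs_lt_top {μ : Measure ℝ} [IsFiniteMeasure μ]
    {p δ : ℝ} (hp : 0 < p) (hδ : 0 < δ) (hmoment : Integrable (fun x => |x| ^ (2 * p)) μ) :
    ∑' k : ℕ, (k : ℝ≥0∞) * μ {x | δ * (k : ℝ) ^ (1 / p) ≤ |x|} < ∞ := by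
  set f : ℝ → ℝ := fun x => (|x| / δ) ^ p
  have hf2 : Integrable (fun x => f x ^ 2) μ := by
    refine (hmoment.div_const (δ ^ (2 * p))).congr (ae_of_all _ fun x => ?_)
    simp only [f, Real.div_rpow (abs_nonneg x) hδ.le, div_pow,
      ← Real.rpow_mul_natCast (abs_nonneg x), ← Real.rpow_mul_natCast hδ.le]
    norm_num [mul_comm p]
  refine lt_of_le_of_lt (ENNReal.tsum_le_tsum fun k => ?_)
    (tsum_natCast_mul_measure_le_lt_top ((measurable_abs.div_const δ).pow_const p) hf2)
  refine mul_le_mul_right (measure_mono fun x hx => ?_) _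
  have hx : (k : ℝ) ^ (1 / p) ≤ |x| / δ := (le_div_iff₀' hδ).2 hx
  calc (k : ℝ) = ((k : ℝ) ^ (1 / p)) ^ p := by
        rw [← Real.rpow_mul k.cast_nonneg, one_div_mul_cancel hp.ne', Real.rpow_one]
    _ ≤ f x := Real.rpow_le_rpow (by positivity) hx hp.le

lemma ae_eventually_notMem_of_eventually_measure_le {α : Type*} [MeasurableSpace α]
    {μ : Measure α} {s : ℕ → Set α} {f : ℕ → ℝ≥0∞}
    (hle : ∀ᶠ n in atTop, μ (s n) ≤ f n) (hf : ∑' n, f n ≠ ∞) :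
    ∀ᵐ x ∂μ, ∀ᶠ n in atTop, x ∉ s n := by
  obtain ⟨N, hN⟩ := eventually_atTop.1 hle
  have hsum : ∑' n, μ (if N ≤ n then s n else ∅) ≠ ∞ :=
    ne_top_of_le_ne_top hf <| ENNReal.tsum_le_tsum fun n => by
      split_ifs with h
      · exact hN n h
      · simp
  filter_upwards [ae_eventually_notMem hsum] with x hx
  filter_upwards [hx, eventually_ge_atTop N] with n hxn hn
  simpa [hn] using hxn

lemma ae_tendsto_zero_of_forall_ae_eventually_abs_le {α : Type*} [MeasurableSpace α]
    {μ : Measure α} {f : ℕ → α → ℝ}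
    (h : ∀ ε > 0, ∀ᵐ x ∂μ, ∀ᶠ n in atTop, |f n x| ≤ ε) :
    ∀ᵐ x ∂μ, Tendsto (fun n => f n x) atTop (nhds 0) := by
  filter_upwards [ae_all_iff.2 fun q : ℕ => h (1 / (q + 1)) Nat.one_div_pos_of_nat] with x hx
  refine NormedAddGroup.tendsto_nhds_zero.2 fun ε hε => ?_
  obtain ⟨q, hq⟩ := exists_nat_one_div_lt hε
  filter_upwards [hx q] with n hn
  rw [Real.norm_eq_abs]
  exact hn.trans_lt hq

lemma summable_div_rpow_pow {r : ℝ} {J : ℕ} (hJ : 1 < (J + 1) * (r - 1)) :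
    Summable fun k : ℕ => ((k : ℝ) / (k : ℝ) ^ r) ^ (J + 1) := by
  have hexp : (1 - r) * ((J + 1 : ℕ) : ℝ) < -1 := by push_cast; linarith
  refine (Real.summable_nat_rpow.2 hexp).congr fun k => ?_
  rcases k.eq_zero_or_pos with rfl | hk
  · rw [Nat.cast_zero, Real.zero_rpow (by linarith)]
    simp
  · rw [Real.rpow_mul_natCast k.cast_nonneg, Real.rpow_sub (by positivity), Real.rpow_one]

lemma measure_biUnion_inter_le_mul {α ι : Type*} [MeasurableSpace α] {μ : Measure α}
    {s : Finset ι} {E G : ι → Set α} {β : ℝ≥0∞} (hdisj : Set.PairwiseDisjoint ↑s E)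
    (hE : ∀ k ∈ s, MeasurableSet (E k))
    (hindep : ∀ k ∈ s, μ (E k ∩ G k) = μ (E k) * μ (G k))
    (hG : ∀ k ∈ s, μ (G k) ≤ β) :
    μ (⋃ k ∈ s, E k ∩ G k) ≤ β * μ (⋃ k ∈ s, E k) := calc
  _ ≤ ∑ k ∈ s, μ (E k ∩ G k) := measure_biUnion_finset_le _ _
  _ ≤ ∑ k ∈ s, μ (E k) * β :=
      sum_le_sum fun k hk => (hindep k hk).trans_le (by gcongr; exact hG k hk)
  _ = β * μ (⋃ k ∈ s, E k) := by rw [← sum_mul, measure_biUnion_finset hdisj hE, mul_comm]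

lemma memLp_id_of_integrable_abs_rpow {μ : Measure ℝ} {q : ℝ} (hq : 0 < q)
    (hmoment : Integrable (fun x => |x| ^ q) μ) : MemLp id (ENNReal.ofReal q) μ :=
  (integrable_norm_rpow_iff aestronglyMeasurable_id (by simpa using hq) ENNReal.ofReal_ne_top).1
    (by simpa [ENNReal.toReal_ofReal hq.le] using hmoment)

lemma measurable_truncation_id (T : ℝ) : Measurable (truncation (id : ℝ → ℝ) T) :=
  measurable_id.indicator measurableSet_Ioc

lemma abs_integral_truncation_le {μ : Measure ℝ} [IsProbabilityMeasure μ] {T : ℝ}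
    (hT : 0 ≤ T) : |∫ x, truncation id T x ∂μ| ≤ T := by
  simpa [abs_of_nonneg hT] using norm_integral_le_of_norm_le_const (μ := μ)
    (f := truncation id T) (ae_of_all _ fun x => abs_truncation_le_bound id T x)

lemma rpow_mul_abs_sub_truncation_le {T q : ℝ} (hT : 0 < T) (hq : 1 ≤ q) (x : ℝ) :
    T ^ q * |x - truncation id T x| ≤ T * |x| ^ q := by
  by_cases hx : x ∈ Set.Ioc (-T) T
  · simp only [truncation, Function.comp_apply, Set.indicator_of_mem hx, id, sub_self, abs_zero,
      mul_zero]
    positivity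
  have hTx : T ≤ |x| := by
    simp only [Set.mem_Ioc, not_and_or, not_lt, not_le] at hx
    rcases hx with h | h
    · rw [abs_of_neg (by linarith)]; linarith
    · rw [abs_of_pos (by linarith)]; exact h.le
  simp only [truncation, Function.comp_apply, id, Set.indicator_of_notMem hx, sub_zero]
  calc T ^ q * |x| = T * (T ^ (q - 1) * |x|) := by rw [Real.rpow_sub_one hT.ne']; field_simp
    _ ≤ T * (|x| ^ (q - 1) * |x|) := by gcongr
    _ = T * |x| ^ q := by
        rw [Real.rpow_sub_one (hT.trans_le hTx).ne', div_mul_cancel₀ _ (hT.trans_le hTx).ne']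

lemma rpow_mul_abs_integral_truncation_le {μ : Measure ℝ} [IsProbabilityMeasure μ] {T q : ℝ}
    (hT : 0 < T) (hq : 1 ≤ q) (hmean : ∫ x, x ∂μ = 0)
    (hmoment : Integrable (fun x => |x| ^ q) μ) :
    T ^ q * |∫ x, truncation id T x ∂μ| ≤ T * ∫ x, |x| ^ q ∂μ := by
  have hid : Integrable id μ := memLp_one_iff_integrable.1 <|
    (memLp_id_of_integrable_abs_rpow (by linarith) hmoment).mono_exponent
      (by simpa using ENNReal.one_le_ofReal.2 hq)
  have htrunc : Integrable (truncation id T) μ := aestronglyMeasurable_id.integrable_truncation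
  have hdiff : ∫ x, truncation id T x ∂μ = -∫ x, (x - truncation id T x) ∂μ := by
    rw [integral_sub (f := fun x => x) hid htrunc, hmean, zero_sub, neg_neg]
  calc T ^ q * |∫ x, truncation id T x ∂μ|
      = |∫ x, T ^ q * (x - truncation id T x) ∂μ| := by
        rw [hdiff, abs_neg, integral_const_mul, abs_mul,
          abs_of_pos (by positivity : (0 : ℝ) < T ^ q)]
    _ ≤ ∫ x, |T ^ q * (x - truncation id T x)| ∂μ := abs_integral_le_integral_abs
    _ ≤ ∫ x, T * |x| ^ q ∂μ := by
        refine integral_mono ((hid.sub htrunc).const_mul _).abs (hmoment.const_mul T) fun x => ?_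
        rw [abs_mul, abs_of_pos (by positivity)]
        exact rpow_mul_abs_sub_truncation_le hT hq x
    _ = T * ∫ x, |x| ^ q ∂μ := integral_const_mul _ _

lemma lt_abs_sum_truncation_sub {M : ℕ} {x : Fin M → ℝ} {T c L : ℝ} (hx : ∀ i, |x i| < T)
    (h : L + M * |c| < |∑ i, x i|) : L < |∑ i, (truncation id T (x i) - c)| := by
  have hsum : ∑ i, (truncation id T (x i) - c) = ∑ i, x i - M * c := by
    simp [Finset.sum_sub_distrib, truncation_eq_self (f := id) (hx _)]
  have hMc : |(M : ℝ) * c| = M * |c| := by rw [abs_mul, Nat.abs_cast]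
  rw [hsum]
  linarith [abs_sub_abs_le_abs_sub (∑ i, x i) (M * c)]

variable {Ω : Type*}

/- A row of length `M` is encoded as a family `ξ : ℕ → Ω → ℝ` of which only the first `M`
entries are assumed independent; all block sums `∑ i ∈ Ico a b` below have `b ≤ M`. -/

@[reducible] def sigmaBefore (ξ : ℕ → Ω → ℝ) (M k : ℕ) : MeasurableSpace Ω :=
  ⨆ i ∈ {i : Fin M | (i : ℕ) < k}, MeasurableSpace.comap (ξ i) inferInstance

@[reducible] def sigmaFrom (ξ : ℕ → Ω → ℝ) (M k : ℕ) : MeasurableSpace Ω :=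
  ⨆ i ∈ {i : Fin M | k ≤ (i : ℕ)}, MeasurableSpace.comap (ξ i) inferInstance

def partialSumsExceed (ξ : ℕ → Ω → ℝ) (M a : ℕ) (L : ℝ) : Set Ω :=
  {ω | ∃ l ∈ Ioc a M, L < |∑ i ∈ Ico a l, ξ i ω|}

def firstExceedance (ξ : ℕ → Ω → ℝ) (a : ℕ) (L : ℝ) (k : ℕ) : Set Ω :=
  {ω | (∀ j ∈ Ioo a k, |∑ i ∈ Ico a j, ξ i ω| ≤ L) ∧
    L < |∑ i ∈ Ico a k, ξ i ω|}

section PastAndFuture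

variable {ξ : ℕ → Ω → ℝ} {M a : ℕ} {L : ℝ}

lemma sigmaBefore_le [MeasurableSpace Ω] (hmeas : ∀ i, Measurable (ξ i)) (k : ℕ) :
    sigmaBefore ξ M k ≤ ‹MeasurableSpace Ω› :=
  iSup₂_le fun i _ => (hmeas i).comap_le

lemma indep_sigmaBefore_sigmaFrom [MeasurableSpace Ω] {P : Measure Ω}
    (hind : iIndepFun (fun i : Fin M => ξ i) P) (hmeas : ∀ i, Measurable (ξ i)) (k : ℕ) :
    Indep (sigmaBefore ξ M k) (sigmaFrom ξ M k) P :=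
  indep_iSup_of_disjoint (m := fun i : Fin M => MeasurableSpace.comap (ξ i) _)
    (fun i => (hmeas i).comap_le) ((iIndepFun_iff_iIndep _ (fun i : Fin M => ξ i) _).1 hind)
    (Set.disjoint_left.2 fun _ (h : _ < k) (h' : k ≤ _) => absurd h' (not_le.2 h))

lemma measurable_sum_Ico_sigmaBefore {b k : ℕ} (hbk : b ≤ k) (hbM : b ≤ M) :
    Measurable[sigmaBefore ξ M k] fun ω => ∑ i ∈ Ico a b, ξ i ω :=
  Finset.measurable_sum _ fun i hi => by
    have hi : i < b := (Finset.mem_Ico.1 hi).2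
    exact measurable_iff_comap_le.2
      (le_iSup₂_of_le (f := fun (j : Fin M) _ => MeasurableSpace.comap (ξ j) _)
        ⟨i, by omega⟩ (show i < k by omega) le_rfl)

lemma measurable_sum_Ico_sigmaFrom {b k : ℕ} (hka : k ≤ a) (hbM : b ≤ M) :
    Measurable[sigmaFrom ξ M k] fun ω => ∑ i ∈ Ico a b, ξ i ω :=
  Finset.measurable_sum _ fun i hi => by
    have hi := Finset.mem_Ico.1 hi
    exact measurable_iff_comap_le.2
      (le_iSup₂_of_le (f := fun (j : Fin M) _ => MeasurableSpace.comap (ξ j) _)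
        ⟨i, by omega⟩ (show k ≤ i by omega) le_rfl)

lemma pairwiseDisjoint_firstExceedance :
    Set.PairwiseDisjoint (Set.Ioi a) (firstExceedance ξ a L) := by
  have key : ∀ k l, a < k → k < l →
      Disjoint (firstExceedance ξ a L k) (firstExceedance ξ a L l) :=
    fun k l hak hkl => Set.disjoint_left.2 fun _ hk hl =>
      (hl.1 k (Finset.mem_Ioo.2 ⟨hak, hkl⟩)).not_gt hk.2
  intro k hk l hl hkl
  rcases lt_or_gt_of_ne hkl with h | h
  · exact key k l hk h
  · exact (key l k hl h).symm

lemma exists_mem_firstExceedance {l : ℕ} {ω : Ω} (hal : a < l)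
    (hl : L < |∑ i ∈ Ico a l, ξ i ω|) :
    ∃ k ∈ Ioc a l, ω ∈ firstExceedance ξ a L k := by
  classical
  have hex : ∃ k, a < k ∧ L < |∑ i ∈ Ico a k, ξ i ω| := ⟨l, hal, hl⟩
  obtain ⟨hak, hk⟩ := Nat.find_spec hex
  refine ⟨Nat.find hex, Finset.mem_Ioc.2 ⟨hak, Nat.find_min' hex ⟨hal, hl⟩⟩, ?_, hk⟩
  intro j hj
  obtain ⟨haj, hjk⟩ := Finset.mem_Ioo.1 hj
  exact not_lt.1 fun h => Nat.find_min hex hjk ⟨haj, h⟩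

lemma abs_sum_Ico_le_of_mem_firstExceedance {k : ℕ} {ω : Ω} (hL : 0 ≤ L) (hak : a ≤ k)
    (hω : ω ∈ firstExceedance ξ a L (k + 1)) :
    |∑ i ∈ Ico a (k + 1), ξ i ω| ≤ L + |ξ k ω| := by
  have hprev : |∑ i ∈ Ico a k, ξ i ω| ≤ L := by
    rcases hak.eq_or_lt with rfl | hak
    · simpa using hL
    · exact hω.1 k (Finset.mem_Ioo.2 ⟨hak, k.lt_succ_self⟩)
  rw [Finset.sum_Ico_succ_top hak]
  linarith [abs_add_le (∑ i ∈ Ico a k, ξ i ω) (ξ k ω)]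

lemma measurableSet_firstExceedance {k : ℕ} (hkM : k ≤ M) :
    MeasurableSet[sigmaBefore ξ M k] (firstExceedance ξ a L k) := by
  have hS : ∀ j ≤ k, Measurable[sigmaBefore ξ M k] fun ω => |∑ i ∈ Ico a j, ξ i ω| :=
    fun j hj => measurable_abs.comp (measurable_sum_Ico_sigmaBefore hj (hj.trans hkM))
  have : firstExceedance ξ a L k =
      (⋂ j ∈ Ioo a k, {ω | |∑ i ∈ Ico a j, ξ i ω| ≤ L}) ∩
        {ω | L < |∑ i ∈ Ico a k, ξ i ω|} := by
    ext ω; simp [firstExceedance]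
  rw [this]
  exact (Finset.measurableSet_biInter _ fun j hj =>
    hS j (Finset.mem_Ioo.1 hj).2.le measurableSet_Iic).inter (hS k le_rfl measurableSet_Ioi)

lemma measurableSet_partialSumsExceed :
    MeasurableSet[sigmaFrom ξ M a] (partialSumsExceed ξ M a L) := by
  have : partialSumsExceed ξ M a L =
      ⋃ l ∈ Ioc a M, {ω | L < |∑ i ∈ Ico a l, ξ i ω|} := by
    ext ω; simp [partialSumsExceed]
  rw [this]
  exact Finset.measurableSet_biUnion _ fun l hl =>
    measurable_abs.comp (measurable_sum_Ico_sigmaFrom le_rfl (Finset.mem_Ioc.1 hl).2)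
      measurableSet_Ioi

lemma measure_firstExceedance_inter [MeasurableSpace Ω] {P : Measure Ω}
    (hind : iIndepFun (fun i : Fin M => ξ i) P) (hmeas : ∀ i, Measurable (ξ i)) {k : ℕ}
    (hkM : k ≤ M) {G : Set Ω} (hG : MeasurableSet[sigmaFrom ξ M k] G) :
    P (firstExceedance ξ a L k ∩ G) = P (firstExceedance ξ a L k) * P G :=
  (Indep_iff _ _ _).1 (indep_sigmaBefore_sigmaFrom hind hmeas k) _ _
    (measurableSet_firstExceedance hkM) hG

end PastAndFuture

section MaximalInequalities

variable [MeasurableSpace Ω] {P : Measure Ω} [IsProbabilityMeasure P] {ξ : ℕ → Ω → ℝ}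
  {M : ℕ} {V : ℝ}

lemma measure_lt_abs_sum_Ico_le (hind : iIndepFun (fun i : Fin M => ξ i) P)
    (hL2 : ∀ i, MemLp (ξ i) 2 P) (hmean : ∀ i, P[ξ i] = 0)
    (hvar : ∑ i ∈ range M, variance (ξ i) P ≤ V) {a b : ℕ} (hbM : b ≤ M) {u : ℝ}
    (hu : 0 < u) :
    P {ω | u < |∑ i ∈ Ico a b, ξ i ω|} ≤ ENNReal.ofReal (V / u ^ 2) := by
  set Y := ∑ i ∈ Ico a b, ξ i
  have hY : ∀ ω, Y ω = ∑ i ∈ Ico a b, ξ i ω := fun ω => Finset.sum_apply _ _ _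
  have hYL2 : MemLp Y 2 P := memLp_finsetSum' _ fun i _ => hL2 i
  have hYmean : P[Y] = 0 := by
    simp only [hY]
    rw [integral_finsetSum _ fun i _ => (hL2 i).integrable one_le_two]
    exact Finset.sum_eq_zero fun i _ => hmean i
  have hYvar : variance Y P ≤ V := by
    rw [IndepFun.variance_sum (fun i _ => hL2 i) fun i hi j hj hij =>
      hind.indepFun (i := ⟨i, by simp at hi; omega⟩) (j := ⟨j, by simp at hj; omega⟩)
        (by simpa [Fin.ext_iff] using hij)]
    refine le_trans (Finset.sum_le_sum_of_subset_of_nonneg ?_ fun i _ _ => variance_nonneg _ _)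
      hvar
    intro i hi
    simp only [Finset.mem_Ico, Finset.mem_range] at hi ⊢
    omega
  calc P {ω | u < |∑ i ∈ Ico a b, ξ i ω|}
      ≤ P {ω | u ≤ |Y ω - P[Y]|} :=
        measure_mono fun ω hω => by
          change u ≤ |Y ω - P[Y]|
          rw [hYmean, sub_zero, hY]
          exact hω.le
    _ ≤ ENNReal.ofReal (variance Y P / u ^ 2) := meas_ge_le_variance_div_sq hYL2 hu
    _ ≤ ENNReal.ofReal (V / u ^ 2) := by gcongr

/-- Ottaviani's maximal inequality, in additive form. -/
theorem measure_partialSumsExceed_le (hind : iIndepFun (fun i : Fin M => ξ i) P)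
    (hmeas : ∀ i, Measurable (ξ i)) (hL2 : ∀ i, MemLp (ξ i) 2 P) (hmean : ∀ i, P[ξ i] = 0)
    (hvar : ∑ i ∈ range M, variance (ξ i) P ≤ V) {L : ℝ} (hL : 0 < L) (a : ℕ) :
    P (partialSumsExceed ξ M a L) ≤ 2 * ENNReal.ofReal (9 * V / L ^ 2) := by
  obtain ⟨u, hu, rfl⟩ : ∃ u, 0 < u ∧ L = 3 * u := ⟨L / 3, by positivity, by ring⟩
  rw [show 9 * V / (3 * u) ^ 2 = V / u ^ 2 by field_simp; ring]
  set β := ENNReal.ofReal (V / u ^ 2)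
  set G : ℕ → Set Ω := fun k => {ω | u < |∑ i ∈ Ico k M, ξ i ω|}
  have hincl : partialSumsExceed ξ M a (3 * u) ⊆
      G a ∪ ⋃ k ∈ Ioc a M, firstExceedance ξ a (3 * u) k ∩ G k := by
    rintro ω ⟨l, hl, hω⟩
    obtain ⟨hal, hlM⟩ := Finset.mem_Ioc.1 hl
    by_cases hGa : ω ∈ G a
    · exact Or.inl hGa
    obtain ⟨k, hk, hkω⟩ := exists_mem_firstExceedance hal hω
    obtain ⟨hak, hkl⟩ := Finset.mem_Ioc.1 hk
    have hsplit := Finset.sum_Ico_consecutive (fun i => ξ i ω) hak.le (hkl.trans hlM)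
    have hGk : u < |∑ i ∈ Ico k M, ξ i ω| := by
      have hexc : 3 * u < |∑ i ∈ Ico a k, ξ i ω| := hkω.2
      have hGa : |∑ i ∈ Ico a M, ξ i ω| ≤ u := not_lt.1 hGa
      rw [eq_sub_of_add_eq hsplit] at hexc
      linarith [abs_sub (∑ i ∈ Ico a M, ξ i ω) (∑ i ∈ Ico k M, ξ i ω)]
    exact Or.inr (Set.mem_biUnion (Finset.mem_Ioc.2 ⟨hak, hkl.trans hlM⟩) ⟨hkω, hGk⟩)
  have hGβ : ∀ k, P (G k) ≤ β := fun k =>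
    measure_lt_abs_sum_Ico_le hind hL2 hmean hvar le_rfl hu
  calc P (partialSumsExceed ξ M a (3 * u))
      ≤ P (G a) + P (⋃ k ∈ Ioc a M, firstExceedance ξ a (3 * u) k ∩ G k) :=
        (measure_mono hincl).trans (measure_union_le _ _)
    _ ≤ β + β * P (⋃ k ∈ Ioc a M, firstExceedance ξ a (3 * u) k) := by
        gcongr
        · exact hGβ a
        · refine measure_biUnion_inter_le_mul
            (pairwiseDisjoint_firstExceedance.subset fun k hk => (Finset.mem_Ioc.1 hk).1)
            (fun k hk => sigmaBefore_le hmeas k _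
              (measurableSet_firstExceedance (Finset.mem_Ioc.1 hk).2))
            (fun k hk => measure_firstExceedance_inter hind hmeas (Finset.mem_Ioc.1 hk).2 ?_)
            (fun k _ => hGβ k)
          exact measurable_abs.comp (measurable_sum_Ico_sigmaFrom le_rfl le_rfl) measurableSet_Ioi
    _ ≤ β + β * 1 := by gcongr; exact prob_le_one
    _ = 2 * β := by rw [mul_one, two_mul]

/-- Hoffmann-Jørgensen type step. At the first time the partial sum exceeds `L` it is at most
`2 L`, the jumps being at most `L`; to exceed `3 L` afterwards, the later increments, which are
independent of that time, must exceed `L`. -/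
theorem measure_partialSumsExceed_three_mul_le (hind : iIndepFun (fun i : Fin M => ξ i) P)
    (hmeas : ∀ i, Measurable (ξ i)) (hL2 : ∀ i, MemLp (ξ i) 2 P) (hmean : ∀ i, P[ξ i] = 0)
    (hvar : ∑ i ∈ range M, variance (ξ i) P ≤ V) {L : ℝ} (hL : 0 < L)
    (hjump : ∀ i ω, |ξ i ω| ≤ L) (a : ℕ) :
    P (partialSumsExceed ξ M a (3 * L)) ≤
      2 * ENNReal.ofReal (9 * V / L ^ 2) * P (partialSumsExceed ξ M a L) := by
  have hincl : partialSumsExceed ξ M a (3 * L) ⊆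
      ⋃ k ∈ Ioc a M, firstExceedance ξ a L k ∩ partialSumsExceed ξ M k L := by
    rintro ω ⟨l, hl, hω⟩
    obtain ⟨hal, hlM⟩ := Finset.mem_Ioc.1 hl
    obtain ⟨k, hk, hkω⟩ := exists_mem_firstExceedance hal (show L < _ by linarith)
    obtain ⟨hak, hkl⟩ := Finset.mem_Ioc.1 hk
    have hover : |∑ i ∈ Ico a k, ξ i ω| ≤ 2 * L := by
      obtain ⟨k, rfl⟩ := Nat.exists_eq_add_one_of_ne_zero (by omega : k ≠ 0)
      linarith [abs_sum_Ico_le_of_mem_firstExceedance hL.le (by omega) hkω, hjump k ω]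
    have hkl : k < l := hkl.lt_of_ne fun h => by subst h; linarith
    have hsplit := Finset.sum_Ico_consecutive (fun i => ξ i ω) hak.le hkl.le
    refine Set.mem_biUnion (Finset.mem_Ioc.2 ⟨hak, hkl.le.trans hlM⟩)
      ⟨hkω, l, Finset.mem_Ioc.2 ⟨hkl, hlM⟩, ?_⟩
    rw [← hsplit] at hω
    linarith [abs_add_le (∑ i ∈ Ico a k, ξ i ω) (∑ i ∈ Ico k l, ξ i ω)]
  calc P (partialSumsExceed ξ M a (3 * L))
      ≤ P (⋃ k ∈ Ioc a M, firstExceedance ξ a L k ∩ partialSumsExceed ξ M k L) :=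
        measure_mono hincl
    _ ≤ 2 * ENNReal.ofReal (9 * V / L ^ 2) * P (⋃ k ∈ Ioc a M, firstExceedance ξ a L k) :=
        measure_biUnion_inter_le_mul
          (pairwiseDisjoint_firstExceedance.subset fun k hk => (Finset.mem_Ioc.1 hk).1)
          (fun k hk => sigmaBefore_le hmeas k _
            (measurableSet_firstExceedance (Finset.mem_Ioc.1 hk).2))
          (fun k hk => measure_firstExceedance_inter hind hmeas (Finset.mem_Ioc.1 hk).2
            measurableSet_partialSumsExceed)
          (fun k _ => measure_partialSumsExceed_le hind hmeas hL2 hmean hvar hL k)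
    _ ≤ 2 * ENNReal.ofReal (9 * V / L ^ 2) * P (partialSumsExceed ξ M a L) := by
        gcongr
        simp only [Set.iUnion_subset_iff]
        intro k hk ω hω
        exact ⟨k, hk, hω.2⟩

theorem measure_partialSumsExceed_pow_le (hind : iIndepFun (fun i : Fin M => ξ i) P)
    (hmeas : ∀ i, Measurable (ξ i)) (hL2 : ∀ i, MemLp (ξ i) 2 P) (hmean : ∀ i, P[ξ i] = 0)
    (hvar : ∑ i ∈ range M, variance (ξ i) P ≤ V) {t : ℝ} (ht : 0 < t)
    (hjump : ∀ i ω, |ξ i ω| ≤ t) (a J : ℕ) :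
    P (partialSumsExceed ξ M a (3 ^ J * t)) ≤
      (2 * ENNReal.ofReal (9 * V / t ^ 2)) ^ (J + 1) := by
  have hV : 0 ≤ V := (Finset.sum_nonneg fun i _ => variance_nonneg _ _).trans hvar
  induction J with
  | zero => simpa using measure_partialSumsExceed_le hind hmeas hL2 hmean hvar ht a
  | succ J ih =>
    have h3J : t ≤ 3 ^ J * t := le_mul_of_one_le_left ht.le (one_le_pow₀ (by norm_num))
    calc P (partialSumsExceed ξ M a (3 ^ (J + 1) * t))
        = P (partialSumsExceed ξ M a (3 * (3 ^ J * t))) := by rw [pow_succ', mul_assoc]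
      _ ≤ 2 * ENNReal.ofReal (9 * V / (3 ^ J * t) ^ 2) *
            P (partialSumsExceed ξ M a (3 ^ J * t)) :=
        measure_partialSumsExceed_three_mul_le hind hmeas hL2 hmean hvar (by positivity)
          (fun i ω => (hjump i ω).trans h3J) a
      _ ≤ 2 * ENNReal.ofReal (9 * V / t ^ 2) *
            (2 * ENNReal.ofReal (9 * V / t ^ 2)) ^ (J + 1) := by gcongr
      _ = (2 * ENNReal.ofReal (9 * V / t ^ 2)) ^ (J + 1 + 1) := (pow_succ' _ _).symm

theorem measure_pow_mul_lt_abs_sum_le {ξ : Fin M → Ω → ℝ} (hind : iIndepFun ξ P)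
    (hmeas : ∀ i, Measurable (ξ i)) (hmean : ∀ i, P[ξ i] = 0)
    (hvar : ∑ i, variance (ξ i) P ≤ V) {t : ℝ} (ht : 0 < t)
    (hbound : ∀ i ω, |ξ i ω| ≤ t) (J : ℕ) :
    P {ω | 3 ^ J * t < |∑ i, ξ i ω|} ≤ ENNReal.ofReal ((18 * V / t ^ 2) ^ (J + 1)) := by
  set η : ℕ → Ω → ℝ := fun k => if h : k < M then ξ ⟨k, h⟩ else 0
  have hη : ∀ i : Fin M, η i = ξ i := fun i => dif_pos i.isLt
  have hηmeas : ∀ k, Measurable (η k) := fun k => by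
    by_cases h : k < M <;> simp [η, h, hmeas, measurable_zero]
  have hηbound : ∀ k ω, |η k ω| ≤ t := fun k ω => by
    by_cases h : k < M <;> simp [η, h, hbound, ht.le]
  have hηmean : ∀ k, P[η k] = 0 := fun k => by
    by_cases h : k < M <;> simp [η, h, hmean]
  have hηL2 : ∀ k, MemLp (η k) 2 P := fun k =>
    MemLp.of_bound (hηmeas k).aestronglyMeasurable t (ae_of_all _ (hηbound k))
  have hηind : iIndepFun (fun i : Fin M => η i) P := by simpa only [hη] using hind
  have hηvar : ∑ k ∈ range M, variance (η k) P ≤ V := by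
    simpa only [← Fin.sum_univ_eq_sum_range (fun k => variance (η k) P), hη] using hvar
  have hsum : ∀ ω, ∑ i, ξ i ω = ∑ k ∈ Ico 0 M, η k ω := fun ω => by
    rw [← range_eq_Ico, ← Fin.sum_univ_eq_sum_range (fun k => η k ω)]
    simp only [hη]
  have hV : 0 ≤ V := (Finset.sum_nonneg fun i _ => variance_nonneg _ _).trans hvar
  have hβ : 2 * ENNReal.ofReal (9 * V / t ^ 2) = ENNReal.ofReal (18 * V / t ^ 2) := by
    rw [← ENNReal.ofReal_ofNat 2, ← ENNReal.ofReal_mul zero_le_two]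
    ring_nf
  rw [ENNReal.ofReal_pow (by positivity), ← hβ]
  refine le_trans (measure_mono fun ω hω => ?_) (measure_partialSumsExceed_pow_le hηind hηmeas
    hηL2 hηmean hηvar ht hηbound 0 J)
  have hM : 0 < M := Nat.pos_of_ne_zero fun hM => by
    subst hM
    simp only [Finset.univ_eq_empty, Finset.sum_empty, abs_zero, Set.mem_ofPred_eq] at hω
    exact absurd hω (not_lt.2 (by positivity))
  exact ⟨M, Finset.mem_Ioc.2 ⟨hM, le_rfl⟩, (hsum ω) ▸ hω⟩

end MaximalInequalities

section IdenticallyDistributed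

variable [MeasurableSpace Ω] {P : Measure Ω} {μ : Measure ℝ} [IsProbabilityMeasure μ]

lemma integral_truncation_comp_sub_eq_zero {Y : Ω → ℝ} (hY : Measurable Y)
    (hdist : P.map Y = μ) (T : ℝ) :
    P[fun ω => truncation id T (Y ω) - ∫ x, truncation id T x ∂μ] = 0 := by
  rw [← integral_map hY.aemeasurable
      ((measurable_truncation_id T).sub_const _).aestronglyMeasurable, hdist,
    integral_sub aestronglyMeasurable_id.integrable_truncation (integrable_const _)]
  simp

lemma variance_truncation_comp_sub_le {Y : Ω → ℝ} (hY : Measurable Y) (hdist : P.map Y = μ)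
    (hsq : Integrable (fun x => x ^ 2) μ) (T c : ℝ) :
    variance (fun ω => truncation id T (Y ω) - c) P ≤ ∫ x, x ^ 2 ∂μ := by
  have hT := measurable_truncation_id T
  rw [← Function.comp_def (fun x => truncation id T x - c),
    ← variance_map (hT.sub_const c).aemeasurable hY.aemeasurable, hdist,
    variance_sub_const hT.aestronglyMeasurable]
  refine (variance_le_expectation_sq hT.aestronglyMeasurable).trans
    (integral_mono aestronglyMeasurable_id.memLp_truncation.integrable_sq hsq fun x => ?_)
  exact sq_le_sq.2 (abs_truncation_le_abs_self id T x)

theorem measure_lt_abs_sum_le_of_map_eq [IsProbabilityMeasure P] {M : ℕ}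
    {X : Fin M → Ω → ℝ} (hmeas : ∀ i, Measurable (X i)) (hind : iIndepFun X P)
    (hdist : ∀ i, P.map (X i) = μ) (hsq : Integrable (fun x => x ^ 2) μ) {t : ℝ} (ht : 0 < t)
    (hshift : M * |∫ x, truncation id (t / 2) x ∂μ| ≤ t) (J : ℕ) :
    P {ω | 3 ^ J * t + t < |∑ i, X i ω|} ≤
      M * μ {x | t / 2 ≤ |x|} +
        ENNReal.ofReal ((18 * (M * ∫ x, x ^ 2 ∂μ) / t ^ 2) ^ (J + 1)) := by
  set φ : ℝ → ℝ := fun x => truncation id (t / 2) x - ∫ x, truncation id (t / 2) x ∂μ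
  have hφ : Measurable φ := (measurable_truncation_id _).sub_const _
  have hφbound : ∀ x, |φ x| ≤ t := fun x => by
    have h1 := abs_truncation_le_bound id (t / 2) x
    have h2 := abs_integral_truncation_le (μ := μ) (half_pos ht).le
    rw [abs_of_pos (half_pos ht)] at h1
    linarith [abs_sub (truncation id (t / 2) x) (∫ x, truncation id (t / 2) x ∂μ)]
  have hcentred := measure_pow_mul_lt_abs_sum_le (P := P) (V := M * ∫ x, x ^ 2 ∂μ)
    (hind.comp (fun _ => φ) fun _ => hφ) (fun i => hφ.comp (hmeas i))
    (fun i => integral_truncation_comp_sub_eq_zero (hmeas i) (hdist i) _)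
    ((Finset.sum_le_card_nsmul _ _ _ fun i _ =>
      variance_truncation_comp_sub_le (hmeas i) (hdist i) hsq _ _).trans_eq (by simp))
    ht (fun i ω => hφbound (X i ω)) J
  have hincl : {ω | 3 ^ J * t + t < |∑ i, X i ω|} ⊆
      (⋃ i, X i ⁻¹' {x | t / 2 ≤ |x|}) ∪ {ω | 3 ^ J * t < |∑ i, φ (X i ω)|} := by
    intro ω hω
    by_cases hbig : ∃ i, t / 2 ≤ |X i ω|
    · exact Or.inl (Set.mem_iUnion.2 hbig)
    push Not at hbig
    exact Or.inr (lt_abs_sum_truncation_sub hbig (lt_of_le_of_lt (by linarith) hω))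
  calc P {ω | 3 ^ J * t + t < |∑ i, X i ω|}
      ≤ P (⋃ i, X i ⁻¹' {x | t / 2 ≤ |x|}) + P {ω | 3 ^ J * t < |∑ i, φ (X i ω)|} :=
        (measure_mono hincl).trans (measure_union_le _ _)
    _ ≤ ∑ i, P (X i ⁻¹' {x | t / 2 ≤ |x|}) + _ := by
        gcongr; exact measure_iUnion_fintype_le _ _
    _ = M * μ {x | t / 2 ≤ |x|} + P {ω | 3 ^ J * t < |∑ i, φ (X i ω)|} := by
        simp_rw [← Measure.map_apply (hmeas _) (measurableSet_le measurable_const measurable_abs),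
          hdist]
        simp
    _ ≤ _ := by gcongr; exact hcentred

theorem measure_mul_rpow_lt_abs_sum_le [IsProbabilityMeasure P] {M : ℕ}
    {X : Fin M → Ω → ℝ} (hmeas : ∀ i, Measurable (X i)) (hind : iIndepFun X P)
    (hdist : ∀ i, P.map (X i) = μ) (hsq : Integrable (fun x => x ^ 2) μ) (hM : 0 < M)
    {p κ : ℝ} (hκ : 0 < κ)
    (hshift : M * |∫ x, truncation id (κ * (M : ℝ) ^ (1 / p) / 2) x ∂μ| ≤
      κ * (M : ℝ) ^ (1 / p))
    (J : ℕ) :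
    P {ω | (3 ^ J + 1) * κ * (M : ℝ) ^ (1 / p) < |∑ i, X i ω|} ≤
      M * μ {x | κ / 2 * (M : ℝ) ^ (1 / p) ≤ |x|} +
        ENNReal.ofReal ((18 * (∫ x, x ^ 2 ∂μ) / κ ^ 2) ^ (J + 1) *
          ((M : ℝ) / (M : ℝ) ^ (2 / p)) ^ (J + 1)) := by
  have hM' : (0 : ℝ) < M := by exact_mod_cast hM
  set t := κ * (M : ℝ) ^ (1 / p)
  have ht_sq : t ^ 2 = κ ^ 2 * (M : ℝ) ^ (2 / p) := by
    rw [mul_pow, ← Real.rpow_natCast ((M : ℝ) ^ (1 / p)), ← Real.rpow_mul hM'.le]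
    norm_num [div_eq_mul_inv, mul_comm]
  calc P {ω | (3 ^ J + 1) * κ * (M : ℝ) ^ (1 / p) < |∑ i, X i ω|}
      = P {ω | 3 ^ J * t + t < |∑ i, X i ω|} := by congr! 4; ring
    _ ≤ _ := measure_lt_abs_sum_le_of_map_eq hmeas hind hdist hsq (by positivity) hshift J
    _ = _ := by
      rw [ht_sq, show t / 2 = κ / 2 * (M : ℝ) ^ (1 / p) by ring, ← mul_pow]
      congr 3
      field_simp

end IdenticallyDistributed

lemma eventually_mul_abs_integral_truncation_le {μ : Measure ℝ} [IsProbabilityMeasure μ]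
    {p : ℝ} (hp : 1 ≤ p) (hmean : ∫ x, x ∂μ = 0)
    (hmoment : Integrable (fun x => |x| ^ (2 * p)) μ) {κ : ℝ} (hκ : 0 < κ) :
    ∀ᶠ M : ℕ in atTop, M * |∫ x, truncation id (κ * (M : ℝ) ^ (1 / p) / 2) x ∂μ| ≤
      κ * (M : ℝ) ^ (1 / p) := by
  set A := ∫ x, |x| ^ (2 * p) ∂μ
  filter_upwards [eventually_ge_atTop 1,
    tendsto_natCast_atTop_atTop.eventually_ge_atTop (A / (κ / 2) ^ (2 * p))] with M hM1 hMA
  have hM : (0 : ℝ) < M := by exact_mod_cast hM1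
  set T := κ * (M : ℝ) ^ (1 / p) / 2
  have hT : 0 < T := by positivity
  have hTpow : T ^ (2 * p) = (κ / 2) ^ (2 * p) * M ^ 2 := by
    rw [show T = κ / 2 * (M : ℝ) ^ (1 / p) by ring,
      Real.mul_rpow (by positivity) (by positivity), ← Real.rpow_mul hM.le,
      show 1 / p * (2 * p) = (2 : ℕ) by field_simp; norm_num, Real.rpow_natCast]
  have hkey := rpow_mul_abs_integral_truncation_le hT (by linarith) hmean hmoment
  rw [hTpow] at hkey
  have hA : A ≤ (κ / 2) ^ (2 * p) * M := by rwa [div_le_iff₀' (by positivity)] at hMA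
  have hκM : 0 < (κ / 2) ^ (2 * p) * M := by positivity
  have : (κ / 2) ^ (2 * p) * M * (M * |∫ x, truncation id T x ∂μ|) ≤
      (κ / 2) ^ (2 * p) * M * T := by
    nlinarith [abs_nonneg (∫ x, truncation id T x ∂μ)]
  have hThalf : T ≤ κ * (M : ℝ) ^ (1 / p) := half_le_self (by positivity)
  linarith [le_of_mul_le_mul_left this hκM]

theorem ae_eventually_abs_sum_le [MeasurableSpace Ω] {P : Measure Ω} [IsProbabilityMeasure P]
    {m : ℕ → ℕ} (hm : StrictMono m) {μ : Measure ℝ} [IsProbabilityMeasure μ] {p : ℝ}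
    (hp1 : 1 ≤ p) (hp2 : p < 2) (hmean : ∫ x, x ∂μ = 0)
    (hmoment : Integrable (fun x => |x| ^ (2 * p)) μ) {X : (n : ℕ) → Fin (m n) → Ω → ℝ}
    (hmeas : ∀ n i, Measurable (X n i)) (hindep : ∀ n, iIndepFun (X n) P)
    (hdist : ∀ n i, P.map (X n i) = μ) {ε : ℝ} (hε : 0 < ε) :
    ∀ᵐ ω ∂P, ∀ᶠ n in atTop, |∑ i, X n i ω| ≤ ε * (m n : ℝ) ^ (1 / p) := by
  have hp0 : 0 < p := by linarith
  have hsq : Integrable (fun x => x ^ 2) μ :=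
    (memLp_two_iff_integrable_sq aestronglyMeasurable_id).1 <|
      (memLp_id_of_integrable_abs_rpow (by linarith) hmoment).mono_exponent
        (by rw [← ENNReal.ofReal_ofNat 2]; exact ENNReal.ofReal_le_ofReal (by linarith))
  obtain ⟨J, hJ⟩ : ∃ J : ℕ, 1 < (J + 1) * (2 / p - 1) := by
    have h : 0 < 2 / p - 1 := by rw [sub_pos, lt_div_iff₀ hp0]; linarith
    obtain ⟨J, hJ⟩ := exists_nat_gt (1 / (2 / p - 1))
    exact ⟨J, by rw [div_lt_iff₀ h] at hJ; nlinarith⟩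
  set κ := ε / (3 ^ J + 1)
  have hκ : 0 < κ := by positivity
  have hεκ : ε = (3 ^ J + 1) * κ := by simp only [κ]; field_simp
  set C := 18 * (∫ x, x ^ 2 ∂μ) / κ ^ 2
  have hle : ∀ᶠ n in atTop, P {ω | ε * (m n : ℝ) ^ (1 / p) < |∑ i, X n i ω|} ≤
      m n * μ {x | κ / 2 * (m n : ℝ) ^ (1 / p) ≤ |x|} +
        ENNReal.ofReal (C ^ (J + 1) * ((m n : ℝ) / (m n : ℝ) ^ (2 / p)) ^ (J + 1)) := by
    filter_upwards [hm.tendsto_atTop.eventually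
      (eventually_mul_abs_integral_truncation_le hp1 hmean hmoment hκ), eventually_ge_atTop 1]
      with n hshift hn
    rw [hεκ]
    exact measure_mul_rpow_lt_abs_sum_le (hmeas n) (hindep n) (hdist n) hsq
      (hn.trans (hm.id_le n)) hκ hshift J
  have hsummable :
      Summable fun n => C ^ (J + 1) * ((m n : ℝ) / (m n : ℝ) ^ (2 / p)) ^ (J + 1) :=
    ((summable_div_rpow_pow hJ).comp_injective hm.injective).mul_left _
  have hsum : ∑' n, ((m n : ℝ≥0∞) * μ {x | κ / 2 * (m n : ℝ) ^ (1 / p) ≤ |x|} +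
      ENNReal.ofReal (C ^ (J + 1) * ((m n : ℝ) / (m n : ℝ) ^ (2 / p)) ^ (J + 1))) ≠ ∞ := by
    rw [ENNReal.tsum_add, ← ENNReal.ofReal_tsum_of_nonneg (fun n => by positivity) hsummable]
    exact ENNReal.add_ne_top.2 ⟨ne_top_of_le_ne_top
      (tsum_natCast_mul_measure_mul_rpow_le_abs_lt_top hp0 (half_pos hκ) hmoment).ne
      (ENNReal.tsum_comp_le_tsum_of_injective hm.injective _), ENNReal.ofReal_ne_top⟩
  filter_upwards [ae_eventually_notMem_of_eventually_measure_le hle hsum] with ω hω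
  filter_upwards [hω] with n hn
  exact not_lt.1 hn

end TriangularMZ

open TriangularMZ

theorem triangular_array_MZ_strong_law_general {Ω : Type*} [MeasurableSpace Ω] (P : Measure Ω)
    [IsProbabilityMeasure P] (m : ℕ → ℕ) (hm_mono : StrictMono m)
    (μ : Measure ℝ) [IsProbabilityMeasure μ] (p : ℝ) (hp1 : 1 ≤ p) (hp2 : p < 2)
    (hmean : ∫ x, x ∂μ = 0)
    (hmoment : Integrable (fun x : ℝ => |x| ^ (2 * p)) μ)
    (X : (n : ℕ) → Fin (m n) → Ω → ℝ)
    (hmeas : ∀ n i, Measurable (X n i))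
    (hindep : ∀ n, iIndepFun (X n) P)
    (hdist : ∀ n i, Measure.map (X n i) P = μ) :
    ∀ᵐ ω ∂P, Tendsto
      (fun n : ℕ => ((m n : ℝ) ^ (-(1 / p)) : ℝ) * ∑ i : Fin (m n), X n i ω)
      atTop (nhds 0) := by
  refine ae_tendsto_zero_of_forall_ae_eventually_abs_le fun ε hε => ?_
  filter_upwards [ae_eventually_abs_sum_le hm_mono hp1 hp2 hmean hmoment hmeas hindep hdist hε]
    with ω hω
  filter_upwards [hω, eventually_ge_atTop 1] with n hn hn1
  have hM : (0 : ℝ) < m n := by exact_mod_cast hn1.trans (hm_mono.id_le n)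
  rw [abs_mul, abs_of_nonneg (by positivity), Real.rpow_neg hM.le,
    inv_mul_le_iff₀ (by positivity), mul_comm]
  exact hn

/-- Marcinkiewicz–Zygmund type strong law for triangular arrays: if each row
`X_{n,1}, …, X_{n,mₙ}` consists of i.i.d. copies of a mean-zero random variable with law `μ`
satisfying `E|X|^{2p} < ∞` for some `p ∈ [1,2)`, and `mₙ ↑ ∞`, then
`mₙ^{-1/p} Σᵢ X_{n,i} → 0` almost surely. -/
theorem triangular_array_MZ_strong_law {Ω : Type*} [MeasurableSpace Ω] (P : Measure Ω)
    [IsProbabilityMeasure P] (m : ℕ → ℕ) (hm_mono : StrictMono m)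
    (hm_top : Tendsto m atTop atTop)
    (μ : Measure ℝ) [IsProbabilityMeasure μ] (p : ℝ) (hp1 : 1 ≤ p) (hp2 : p < 2)
    (hmean : ∫ x, x ∂μ = 0)
    (hmoment : Integrable (fun x : ℝ => |x| ^ (2 * p)) μ)
    (X : (n : ℕ) → Fin (m n) → Ω → ℝ)
    (hmeas : ∀ n i, Measurable (X n i))
    (hindep : ∀ n, iIndepFun (X n) P)
    (hdist : ∀ n i, Measure.map (X n i) P = μ) :
    ∀ᵐ ω ∂P, Tendsto
      (fun n : ℕ => ((m n : ℝ) ^ (-(1 / p)) : ℝ) * ∑ i : Fin (m n), X n i ω)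
      atTop (nhds 0) :=
  triangular_array_MZ_strong_law_general P m hm_mono μ p hp1 hp2 hmean hmoment X hmeas hindep hdist
end

section
/- (Weak consistency of the second-stage slope.) Under assumption (A1) with f ∈ 𝓕 (f increasing with f' continuous and positive at d₀ and f''' bounded near d₀) and γ ∈ (0, 1/2), the slope estimator β̂₁ = (2K n₁^{-γ} n₂)^{-1} Σ_{i=1}^{n₂} (Y''_i − Y'_i) converges in probability to f'(d₀), where Y'_i = f(L) + ε'_i, Y''_i = f(U) + ε''_i, L = d̂^{(1)}_{n₁} − K n₁^{-γ}, U = d̂^{(1)}_{n₁} + K n₁^{-γ}, and d̂^{(1)}_{n₁} − d₀ = O_P(n₁^{-1/3}). -/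
open Filter MeasureTheory ProbabilityTheory Finset
open scoped Topology

/-!
Once `n₂ ≠ 0`, `β̂₁` splits as the symmetric difference quotient
`(2h)⁻¹ (f (d̂ + h) - f (d̂ - h))`, `h = K n₁^{-γ}`, plus the noise term
`(2 h n₂)⁻¹ ∑ (ε''ᵢ - ε'ᵢ)`. By the mean value theorem the quotient is `f'` at a point within `h`
of `d̂`; as `d̂ → d₀` in probability (it is `O_P(n₁^{-1/3})`), `h → 0` and `f'` is continuous at
`d₀`, it tends to `f'(d₀)` in probability. The noise term is centred, because `ε'ᵢ` and `ε''ᵢ`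
share a law, and its variance `σ² / (2 h² n₂) ≍ n^{2γ-1}` tends to `0`, so Chebyshev finishes.
-/

theorem exists_pos_abs_symmDiffQuot_sub_deriv_lt {f : ℝ → ℝ} {x₀ : ℝ}
    (hdiff : ∀ᶠ y in 𝓝 x₀, DifferentiableAt ℝ f y) (hcont : ContinuousAt (deriv f) x₀)
    {η : ℝ} (hη : 0 < η) :
    ∃ δ > 0, ∀ x h : ℝ, 0 < h → h ≤ δ → |x - x₀| ≤ δ →
      |(2 * h)⁻¹ * (f (x + h) - f (x - h)) - deriv f x₀| < η := by
  obtain ⟨r, hr, hnear⟩ := Metric.eventually_nhds_iff.1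
    (hdiff.and (hcont.eventually (Metric.ball_mem_nhds _ hη)))
  refine ⟨r / 3, by positivity, fun x h hh hhδ hx => ?_⟩
  have hIcc : ∀ y ∈ Set.Icc (x - h) (x + h), dist y x₀ < r := fun y hy => by
    rw [Real.dist_eq, abs_lt]
    constructor <;> linarith [hy.1, hy.2, abs_le.1 hx]
  obtain ⟨c, hc, hslope⟩ := exists_deriv_eq_slope f (by linarith : x - h < x + h)
    (fun y hy => (hnear (hIcc y hy)).1.continuousAt.continuousWithinAt)
    (fun y hy => (hnear (hIcc y (Set.Ioo_subset_Icc_self hy))).1.differentiableWithinAt)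
  rw [show x + h - (x - h) = 2 * h by ring, div_eq_inv_mul] at hslope
  rw [← hslope, ← Real.dist_eq]
  exact (hnear (hIcc c (Set.Ioo_subset_Icc_self hc))).2

theorem tendsto_natFloor_natCast_mul_atTop {a : ℝ} (ha : 0 < a) :
    Tendsto (fun n : ℕ => (⌊(n : ℝ) * a⌋₊ : ℝ)) atTop atTop :=
  tendsto_natCast_atTop_atTop.comp <| tendsto_nat_floor_atTop.comp <|
    tendsto_natCast_atTop_atTop.atTop_mul_const ha

theorem tendsto_mul_natFloor_natCast_mul_rpow_neg_nhdsGT {a K γ : ℝ} (ha : 0 < a) (hK : 0 < K)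
    (hγ : 0 < γ) :
    Tendsto (fun n : ℕ => K * (⌊(n : ℝ) * a⌋₊ : ℝ) ^ (-γ)) atTop (𝓝[>] 0) := by
  have hfloor := tendsto_natFloor_natCast_mul_atTop ha
  refine tendsto_nhdsWithin_iff.2 ⟨?_, ?_⟩
  · simpa using ((tendsto_rpow_neg_atTop hγ).comp hfloor).const_mul K
  · filter_upwards [hfloor.eventually_gt_atTop 0] with n hn
    exact mul_pos hK (Real.rpow_pos_of_pos hn _)

theorem tendsto_rpow_neg_natFloor_sq_mul_natFloor_atTop {a b γ : ℝ} (ha : 0 < a) (hb : 0 < b)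
    (hγ0 : 0 ≤ γ) (hγ : γ < 1 / 2) :
    Tendsto (fun n : ℕ => ((⌊(n : ℝ) * a⌋₊ : ℝ) ^ (-γ)) ^ 2 * ⌊(n : ℝ) * b⌋₊) atTop atTop := by
  have hlin : Tendsto (fun n : ℕ => (n : ℝ)) atTop atTop := tendsto_natCast_atTop_atTop
  have hpow : Tendsto (fun n : ℕ => a ^ (-γ * 2) * (b / 2) * (n : ℝ) ^ (-γ * 2 + 1))
      atTop atTop :=
    ((tendsto_rpow_atTop (by linarith)).comp hlin).const_mul_atTop (by positivity)
  refine tendsto_atTop_mono' _ ?_ hpow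
  filter_upwards [hlin.eventually_ge_atTop (1 / a), hlin.eventually_ge_atTop (2 / b)]
    with n hna hnb
  rw [div_le_iff₀ ha] at hna
  rw [div_le_iff₀ hb] at hnb
  have hn : (0 : ℝ) < n := by nlinarith
  have hx : (0 : ℝ) < ⌊(n : ℝ) * a⌋₊ := Nat.cast_pos.2 (Nat.floor_pos.2 hna)
  calc a ^ (-γ * 2) * (b / 2) * (n : ℝ) ^ (-γ * 2 + 1)
      = (((n : ℝ) * a) ^ (-γ)) ^ 2 * ((n : ℝ) * b / 2) := by
        rw [← Real.rpow_mul_natCast (by positivity), Real.mul_rpow hn.le ha.le,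
          Real.rpow_add_one hn.ne']
        push_cast
        ring
    _ ≤ _ := by
        gcongr ?_ ^ 2 * ?_
        · exact Real.rpow_le_rpow_of_nonpos hx (Nat.floor_le (by positivity)) (by linarith)
        · linarith [Nat.sub_one_lt_floor ((n : ℝ) * b)]

theorem tendsto_inv_two_mul_mul_sq_mul_nhds_zero {ι : Type*} {h m : ι → ℝ} {l : Filter ι} {K : ℝ}
    (hK : K ≠ 0) (hhm : Tendsto (fun i => h i ^ 2 * m i) l atTop) :
    Tendsto (fun i => (2 * K * h i * m i)⁻¹ ^ 2 * m i) l (𝓝 0) := by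
  refine (tendsto_inv_atTop_zero.comp
    (hhm.const_mul_atTop (by positivity : 0 < 4 * K ^ 2))).congr' ?_
  filter_upwards [hhm.eventually_gt_atTop 0] with i hi
  obtain ⟨hh, hm⟩ := mul_ne_zero_iff.1 hi.ne'
  simp only [Function.comp_apply]
  field_simp
  ring

section Probability

variable {Ω ι : Type*} [MeasurableSpace Ω] {P : Measure Ω} {l : Filter ι}

theorem MeasureTheory.TendstoInMeasure.add {E : Type*} [SeminormedAddCommGroup E] {f f' : ι → Ω → E}
    {g g' : Ω → E} (hf : TendstoInMeasure P f l g) (hf' : TendstoInMeasure P f' l g') :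
    TendstoInMeasure P (fun i => f i + f' i) l (g + g') := by
  rw [tendstoInMeasure_iff_norm] at hf hf' ⊢
  intro ε hε
  refine tendsto_of_tendsto_of_tendsto_of_le_of_le tendsto_const_nhds
    (by simpa using (hf _ (half_pos hε)).add (hf' _ (half_pos hε))) (fun _ => zero_le)
    fun i => (measure_mono fun ω hω => ?_).trans (measure_union_le _ _)
  simp only [Set.mem_ofPred_eq, Set.mem_union, Pi.add_apply, add_sub_add_comm] at hω ⊢
  by_contra! hlt
  linarith [norm_add_le (f i ω - g ω) (f' i ω - g' ω)]

theorem MeasureTheory.TendstoInMeasure.tendstoInMeasure_symmDiffQuot {f : ℝ → ℝ} {x₀ : ℝ}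
    {X : ι → Ω → ℝ} (hX : TendstoInMeasure P X l fun _ => x₀)
    (hdiff : ∀ᶠ y in 𝓝 x₀, DifferentiableAt ℝ f y) (hcont : ContinuousAt (deriv f) x₀)
    {h : ι → ℝ} (hh : Tendsto h l (𝓝[>] 0)) :
    TendstoInMeasure P (fun i ω => (2 * h i)⁻¹ * (f (X i ω + h i) - f (X i ω - h i))) l
      fun _ => deriv f x₀ := by
  rw [tendstoInMeasure_iff_dist] at hX ⊢
  intro ε hε
  obtain ⟨δ, hδ, hquot⟩ := exists_pos_abs_symmDiffQuot_sub_deriv_lt hdiff hcont hε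
  refine tendsto_of_tendsto_of_tendsto_of_le_of_le' tendsto_const_nhds (hX δ hδ)
    (Eventually.of_forall fun _ => zero_le) ?_
  filter_upwards [hh.eventually (Ioo_mem_nhdsGT hδ)] with i hi
  refine measure_mono fun ω hω => ?_
  simp only [Set.mem_ofPred_eq, Real.dist_eq] at hω ⊢
  by_contra! hfar
  exact hω.not_gt (hquot _ _ hi.1 hi.2.le hfar.le)

theorem tendstoInMeasure_of_tight_rate_mul_abs_sub {X : ι → Ω → ℝ} {x₀ : ℝ} {r : ι → ℝ}
    (hr : Tendsto r l atTop)
    (htight : ∀ ε : ℝ, 0 < ε → ∃ M : ℝ, ∀ᶠ i in l,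
      P {ω | M < r i * |X i ω - x₀|} ≤ ENNReal.ofReal ε) :
    TendstoInMeasure P X l fun _ => x₀ := by
  rw [tendstoInMeasure_iff_dist]
  intro δ hδ
  rw [ENNReal.tendsto_nhds_zero]
  intro e he
  have he' : min e 1 ≠ ⊤ := (min_le_right e 1).trans_lt ENNReal.one_lt_top |>.ne
  obtain ⟨M, hM⟩ := htight (min e 1).toReal (ENNReal.toReal_pos (lt_min he one_pos).ne' he')
  filter_upwards [hM, hr.eventually_gt_atTop (max (M / δ) 0)] with i hi hri
  calc P {ω | δ ≤ dist (X i ω) x₀}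
      ≤ P {ω | M < r i * |X i ω - x₀|} := measure_mono fun ω hω => ?_
    _ ≤ min e 1 := by rwa [ENNReal.ofReal_toReal he'] at hi
    _ ≤ e := min_le_left _ _
  rw [Set.mem_ofPred_eq, Real.dist_eq] at hω
  obtain ⟨hMr, hr0⟩ := max_lt_iff.1 hri
  calc M = M / δ * δ := by field_simp
    _ < r i * δ := by gcongr
    _ ≤ r i * |X i ω - x₀| := by gcongr

theorem tendstoInMeasure_zero_of_variance_tendsto_zero [IsFiniteMeasure P] {X : ι → Ω → ℝ}
    (hX : ∀ i, MemLp (X i) 2 P) (hmean : ∀ i, P[X i] = 0)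
    (hvar : Tendsto (fun i => Var[X i; P]) l (𝓝 0)) : TendstoInMeasure P X l 0 := by
  rw [tendstoInMeasure_iff_dist]
  intro ε hε
  have hbound : Tendsto (fun i => ENNReal.ofReal (Var[X i; P] / ε ^ 2)) l (𝓝 0) := by
    simpa using ENNReal.tendsto_ofReal (hvar.div_const (ε ^ 2))
  refine tendsto_of_tendsto_of_tendsto_of_le_of_le tendsto_const_nhds hbound (fun _ => zero_le)
    fun i => ?_
  simpa [Real.dist_eq, hmean i] using meas_ge_le_variance_div_sq (hX i) hε

theorem variance_sum_sub_of_iIndepFun {κ : Type*} {X Y : κ → Ω → ℝ}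
    (hXY : iIndepFun (Sum.elim X Y) P) (hX : ∀ i, MemLp (X i) 2 P) (hY : ∀ i, MemLp (Y i) 2 P)
    (s : Finset κ) :
    Var[fun ω => ∑ i ∈ s, (Y i ω - X i ω); P] = ∑ i ∈ s, (Var[X i; P] + Var[Y i; P]) := by
  set W : κ ⊕ κ → Ω → ℝ := Sum.elim (fun i => -X i) Y
  have hW : iIndepFun W P := by
    convert hXY.comp (Sum.elim (fun _ => Neg.neg) (fun _ => id))
      (by rintro (i | i); exacts [measurable_neg, measurable_id]) using 1
    ext (i | i) ω <;> rfl
  have hsum : (fun ω => ∑ i ∈ s, (Y i ω - X i ω)) = ∑ k ∈ s.disjSum s, W k := by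
    ext ω
    simp only [W, Finset.sum_apply, Finset.sum_disjSum, Sum.elim_inl, Sum.elim_inr, Pi.neg_apply,
      Finset.sum_neg_distrib, Finset.sum_sub_distrib]
    ring
  rw [hsum, IndepFun.variance_sum (fun k _ => ?_) (fun j _ k _ hjk => hW.indepFun hjk),
    Finset.sum_disjSum, ← Finset.sum_add_distrib]
  · simp [W, variance_neg]
  · rcases k with i | i
    exacts [(hX i).neg, hY i]

theorem tendstoInMeasure_mul_sum_sub_of_map_eq [IsProbabilityMeasure P] {μ : Measure ℝ}
    (hμ : MemLp id 2 μ) {X Y : ℕ → Ω → ℝ} (hXY : iIndepFun (Sum.elim X Y) P)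
    (hXm : ∀ j, Measurable (X j)) (hYm : ∀ j, Measurable (Y j))
    (hXμ : ∀ j, P.map (X j) = μ) (hYμ : ∀ j, P.map (Y j) = μ)
    {c : ι → ℝ} {m : ι → ℕ}
    (hcm : Tendsto (fun i => c i ^ 2 * m i) l (𝓝 0)) :
    TendstoInMeasure P (fun i ω => c i * ∑ j ∈ range (m i), (Y j ω - X j ω)) l 0 := by
  have hXid (j : ℕ) : IdentDistrib (X j) id P μ :=
    ⟨(hXm j).aemeasurable, aemeasurable_id, by simp [hXμ j]⟩
  have hYid (j : ℕ) : IdentDistrib (Y j) id P μ :=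
    ⟨(hYm j).aemeasurable, aemeasurable_id, by simp [hYμ j]⟩
  have hXL (j : ℕ) : MemLp (X j) 2 P := (hXid j).symm.memLp_snd hμ
  have hYL (j : ℕ) : MemLp (Y j) 2 P := (hYid j).symm.memLp_snd hμ
  refine tendstoInMeasure_zero_of_variance_tendsto_zero
    (fun i => (memLp_finsetSum _ fun j _ => (hYL j).sub (hXL j)).const_mul (c i))
    (fun i => ?_) ?_
  · rw [integral_const_mul, integral_finsetSum (f := fun j ω => Y j ω - X j ω) _ fun j _ =>
      ((hYL j).integrable one_le_two).sub ((hXL j).integrable one_le_two)]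
    simp [integral_sub ((hYL _).integrable one_le_two) ((hXL _).integrable one_le_two),
      (hXid _).integral_eq, (hYid _).integral_eq]
  · simp_rw [variance_const_mul, variance_sum_sub_of_iIndepFun hXY hXL hYL, (hXid _).variance_eq,
      (hYid _).variance_eq, sum_const, card_range, nsmul_eq_mul]
    simpa [mul_assoc] using hcm.mul_const (Var[id; μ] + Var[id; μ])

end Probability

theorem second_stage_slope_consistency_general {Ω : Type*} [MeasurableSpace Ω] (P : Measure Ω)
    [IsProbabilityMeasure P] (f : ℝ → ℝ) (d₀ σ p K γ ε₀ : ℝ)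
    (hp0 : 0 < p) (hp1 : p < 1) (hK : 0 < K) (hγ0 : 0 < γ) (hγ : γ < 1 / 2)
    (hσ : 0 < σ) (hε₀ : 0 < ε₀)
    (hf_smooth : ContDiffOn ℝ 3 f (Metric.ball d₀ ε₀))
    (d : ℕ → Ω → ℝ)
    (hd_tight : ∀ ε : ℝ, 0 < ε → ∃ M : ℝ, 0 < M ∧ ∀ᶠ n : ℕ in atTop,
      P {ω | M < (⌊(n : ℝ) * p⌋₊ : ℝ) ^ ((1 : ℝ) / 3) * |d n ω - d₀|}
        ≤ ENNReal.ofReal ε)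
    (μ : Measure ℝ)
    (hvar : ∫ x, x ^ 2 ∂μ = σ ^ 2)
    (ε' ε'' : ℕ → Ω → ℝ)
    (hmeas' : ∀ i, Measurable (ε' i)) (hmeas'' : ∀ i, Measurable (ε'' i))
    (herr_indep : iIndepFun
      (Sum.elim ε' ε'') P)
    (hdist' : ∀ i, Measure.map (ε' i) P = μ) (hdist'' : ∀ i, Measure.map (ε'' i) P = μ) :
    TendstoInMeasure P
      (fun (n : ℕ) (ω : Ω) =>
        (2 * K * ((⌊(n : ℝ) * p⌋₊ : ℝ) ^ (-γ)) * (⌊(n : ℝ) * (1 - p) / 2⌋₊ : ℝ))⁻¹ *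
          ∑ i ∈ range ⌊(n : ℝ) * (1 - p) / 2⌋₊,
            ((f (d n ω + K * (⌊(n : ℝ) * p⌋₊ : ℝ) ^ (-γ)) + ε'' i ω)
              - (f (d n ω - K * (⌊(n : ℝ) * p⌋₊ : ℝ) ^ (-γ)) + ε' i ω)))
      atTop (fun _ => deriv f d₀) := by
  have hdiff : ∀ᶠ y in 𝓝 d₀, DifferentiableAt ℝ f y :=
    eventually_of_mem (Metric.ball_mem_nhds d₀ hε₀) fun y hy =>
      (hf_smooth.differentiableOn (by norm_num)).differentiableAt (Metric.isOpen_ball.mem_nhds hy)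
  have hcont : ContinuousAt (deriv f) d₀ :=
    (hf_smooth.continuousOn_deriv_of_isOpen Metric.isOpen_ball (by norm_num)).continuousAt
      (Metric.ball_mem_nhds d₀ hε₀)
  have hd : TendstoInMeasure P d atTop fun _ => d₀ :=
    tendstoInMeasure_of_tight_rate_mul_abs_sub
      ((tendsto_rpow_atTop (by norm_num)).comp (tendsto_natFloor_natCast_mul_atTop hp0))
      fun ε hε => (hd_tight ε hε).imp fun _ hM => hM.2
  have hsize := tendsto_rpow_neg_natFloor_sq_mul_natFloor_atTop hp0
    (b := (1 - p) / 2) (by linarith) hγ0.le hγ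
  simp_rw [← mul_div_assoc] at hsize
  have hμ : MemLp id 2 μ := (memLp_two_iff_integrable_sq aestronglyMeasurable_id).2 <|
    Integrable.of_integral_ne_zero (hvar ▸ (pow_pos hσ 2).ne')
  refine ((hd.tendstoInMeasure_symmDiffQuot hdiff hcont
    (tendsto_mul_natFloor_natCast_mul_rpow_neg_nhdsGT hp0 hK hγ0)).add
    (tendstoInMeasure_mul_sum_sub_of_map_eq hμ herr_indep hmeas' hmeas'' hdist' hdist''
      (tendsto_inv_two_mul_mul_sq_mul_nhds_zero hK.ne' hsize))).congr' ?_
    (.of_forall fun _ => add_zero _)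
  filter_upwards [hsize.eventually_gt_atTop 0] with n hn
  refine .of_forall fun ω => ?_
  obtain ⟨hA, hm⟩ := mul_ne_zero_iff.1 hn.ne'
  simp only [Pi.add_apply, add_sub_add_comm, sum_add_distrib, sum_const, card_range,
    nsmul_eq_mul]
  field_simp

/-- Weak consistency of the second-stage slope estimator: with `f` increasing, three times
continuously differentiable near `d₀` with `f'(d₀) > 0`, a first-stage estimator `d̂` that
is `O_P(n₁^{-1/3})`-consistent for `d₀`, i.i.d. mean-zero variance-`σ²` second-stage errors
independent of the first stage, and sampling points `L = d̂ - K n₁^{-γ}`, `U = d̂ + K n₁^{-γ}`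
with `γ ∈ (0, 1/2)`, the slope estimator
`β̂₁ = (2 K n₁^{-γ} n₂)⁻¹ Σᵢ (Y''ᵢ - Y'ᵢ)` converges in probability to `f'(d₀)`. -/
theorem second_stage_slope_consistency {Ω : Type*} [MeasurableSpace Ω] (P : Measure Ω)
    [IsProbabilityMeasure P] (f : ℝ → ℝ) (d₀ σ p K γ ε₀ : ℝ)
    (hp0 : 0 < p) (hp1 : p < 1) (hK : 0 < K) (hγ0 : 0 < γ) (hγ : γ < 1 / 2)
    (hσ : 0 < σ) (hε₀ : 0 < ε₀)
    (hf_mono : Monotone f)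
    (hf_smooth : ContDiffOn ℝ 3 f (Metric.ball d₀ ε₀))
    (hf_deriv_pos : 0 < deriv f d₀)
    (d : ℕ → Ω → ℝ) (hd_meas : ∀ n, Measurable (d n))
    (hd_tight : ∀ ε : ℝ, 0 < ε → ∃ M : ℝ, 0 < M ∧ ∀ᶠ n : ℕ in atTop,
      P {ω | M < (⌊(n : ℝ) * p⌋₊ : ℝ) ^ ((1 : ℝ) / 3) * |d n ω - d₀|}
        ≤ ENNReal.ofReal ε)
    (μ : Measure ℝ) [IsProbabilityMeasure μ]
    (hmean : ∫ x, x ∂μ = 0) (hvar : ∫ x, x ^ 2 ∂μ = σ ^ 2)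
    (ε' ε'' : ℕ → Ω → ℝ)
    (hmeas' : ∀ i, Measurable (ε' i)) (hmeas'' : ∀ i, Measurable (ε'' i))
    (herr_indep : iIndepFun
      (Sum.elim ε' ε'') P)
    (hdist' : ∀ i, Measure.map (ε' i) P = μ) (hdist'' : ∀ i, Measure.map (ε'' i) P = μ)
    (hstage_indep : Indep (⨆ n, MeasurableSpace.comap (d n) inferInstance)
      (⨆ i : ℕ ⊕ ℕ, MeasurableSpace.comap (Sum.elim ε' ε'' i) inferInstance) P) :
    TendstoInMeasure P
      (fun (n : ℕ) (ω : Ω) =>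
        (2 * K * ((⌊(n : ℝ) * p⌋₊ : ℝ) ^ (-γ)) * (⌊(n : ℝ) * (1 - p) / 2⌋₊ : ℝ))⁻¹ *
          ∑ i ∈ range ⌊(n : ℝ) * (1 - p) / 2⌋₊,
            ((f (d n ω + K * (⌊(n : ℝ) * p⌋₊ : ℝ) ^ (-γ)) + ε'' i ω)
              - (f (d n ω - K * (⌊(n : ℝ) * p⌋₊ : ℝ) ^ (-γ)) + ε' i ω)))
      atTop (fun _ => deriv f d₀) :=
  second_stage_slope_consistency_general P f d₀ σ p K γ ε₀ hp0 hp1 hK hγ0 hγ hσ hε₀ hf_smooth d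
    hd_tight μ hvar ε' ε'' hmeas' hmeas'' herr_indep hdist' hdist''
end
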